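/- arXiv:0711.3437 — 2 statements merged into one kernel-verified Lean document; each statement's English description precedes it below -/
import Mathlib

section
/- Let K be a Lie group, φ ∈ Aut(K), and define the twisted loop group C^∞(ℝ,K)_φ = { f ∈ C^∞(ℝ,K) : f(t+1) = φ^{-1}(f(t)) for all t }. Then the image of the evaluation homomorphism ev₀ : C^∞(ℝ,K)_φ → K, f ↦ f(0), is exactly the set K^{[φ]} = { k ∈ K : φ(k)k^{-1} ∈ K₀ }, where K₀ is the identity component of K. -/
/-!
If `f` is a twisted loop with `f 0 = k`, then `f (-1) = φ k`, so `s ↦ f s * k⁻¹` joins `1` to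
`φ k * k⁻¹` inside `K₀`. Conversely, the endpoints of smooth paths from `1` that are constant
outside `[0, 1]` form a subgroup which is a neighbourhood of `1`, hence clopen, hence contains
`K₀`. Such a path from `k` to `φ⁻¹ k` extends to `ℝ` by `f (t + n) = φ⁻ⁿ (f t)`, and its
constancy near the ends makes the extension smooth at the integers.
-/

open Set Metric Filter Topology
open scoped ContDiff Manifold

section FlatPaths

variable {E : Type*} [NormedAddCommGroup E] [NormedSpace ℝ E]
  {H : Type*} [TopologicalSpace H] {I : ModelWithCorners ℝ E H}
  {M : Type*} [TopologicalSpace M] [ChartedSpace H M]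

/-- Constancy outside `[0, 1]` is what lets the pieces of `twistedExtension` glue smoothly. -/
def JoinedByFlatPath (I : ModelWithCorners ℝ E H) (x y : M) : Prop :=
  ∃ γ : ℝ → M, ContMDiff 𝓘(ℝ, ℝ) I ∞ γ ∧ (∀ t ≤ 0, γ t = x) ∧ ∀ t ≥ 1, γ t = y

namespace JoinedByFlatPath

theorem refl (x : M) : JoinedByFlatPath I x x :=
  ⟨fun _ ↦ x, contMDiff_const, fun _ _ ↦ rfl, fun _ _ ↦ rfl⟩

theorem symm {x y : M} (h : JoinedByFlatPath I x y) : JoinedByFlatPath I y x := by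
  obtain ⟨γ, hγ, hx, hy⟩ := h
  exact ⟨fun t ↦ γ (1 - t), hγ.comp (contDiff_const.sub contDiff_id).contMDiff,
    fun t ht ↦ hy _ (by linarith), fun t ht ↦ hx _ (by linarith)⟩

theorem map {E' : Type*} [NormedAddCommGroup E'] [NormedSpace ℝ E']
    {H' : Type*} [TopologicalSpace H'] {I' : ModelWithCorners ℝ E' H'}
    {N : Type*} [TopologicalSpace N] [ChartedSpace H' N] {f : M → N}
    (hf : ContMDiff I I' ∞ f) {x y : M} (h : JoinedByFlatPath I x y) :
    JoinedByFlatPath I' (f x) (f y) := by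
  obtain ⟨γ, hγ, hx, hy⟩ := h
  exact ⟨f ∘ γ, hf.comp hγ, fun t ht ↦ congrArg f (hx t ht),
    fun t ht ↦ congrArg f (hy t ht)⟩

end JoinedByFlatPath

/-- The straight segment in a chart, reparametrized by `Real.smoothTransition`, stays in the
chart because `range I` is convex. -/
theorem eventually_joinedByFlatPath [IsManifold I ∞ M] (x : M) :
    ∀ᶠ y in 𝓝 x, JoinedByFlatPath I x y := by
  set c := extChartAt I x
  obtain ⟨ε, hε, hball⟩ :=
    Metric.mem_nhdsWithin_iff.1 (extChartAt_target_mem_nhdsWithin (I := I) x)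
  have hnhds : c.source ∩ c ⁻¹' ball (c x) ε ∈ 𝓝 x :=
    inter_mem (extChartAt_source_mem_nhds x)
      ((continuousAt_extChartAt x).preimage_mem_nhds (ball_mem_nhds _ hε))
  filter_upwards [hnhds] with y ⟨hy, hyε⟩
  set u : ℝ → E := fun t ↦ c x + Real.smoothTransition t • (c y - c x)
  have hu : ∀ t, u t ∈ c.target := fun t ↦ hball <|
    ((convex_ball (c x) ε).inter I.convex_range).add_smul_sub_mem
      ⟨mem_ball_self hε, mem_range_self _⟩ ⟨hyε, mem_range_self _⟩
      ⟨Real.smoothTransition.nonneg t, Real.smoothTransition.le_one t⟩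
  refine ⟨c.symm ∘ u, (contMDiffOn_extChartAt_symm x).comp_contMDiff
    (contDiff_const.add (Real.smoothTransition.contDiff.smul contDiff_const)).contMDiff hu,
    fun t ht ↦ ?_, fun t ht ↦ ?_⟩
  · simp [u, Real.smoothTransition.zero_of_nonpos ht,
      c.left_inv (mem_extChartAt_source x)]
  · simp [u, Real.smoothTransition.one_of_one_le ht, c.left_inv hy]

end FlatPaths

section LieGroup

variable {E : Type*} [NormedAddCommGroup E] [NormedSpace ℝ E]
  {H : Type*} [TopologicalSpace H] {I : ModelWithCorners ℝ E H}
  {K : Type*} [TopologicalSpace K] [ChartedSpace H K] [Group K] [LieGroup I ∞ K]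

theorem JoinedByFlatPath.mul {x₁ y₁ x₂ y₂ : K} (h₁ : JoinedByFlatPath I x₁ y₁)
    (h₂ : JoinedByFlatPath I x₂ y₂) : JoinedByFlatPath I (x₁ * x₂) (y₁ * y₂) := by
  obtain ⟨γ₁, hγ₁, hx₁, hy₁⟩ := h₁
  obtain ⟨γ₂, hγ₂, hx₂, hy₂⟩ := h₂
  exact ⟨fun t ↦ γ₁ t * γ₂ t, hγ₁.mul hγ₂,
    fun t ht ↦ by simp only [hx₁ t ht, hx₂ t ht], fun t ht ↦ by simp only [hy₁ t ht, hy₂ t ht]⟩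

theorem JoinedByFlatPath.inv {x y : K} (h : JoinedByFlatPath I x y) :
    JoinedByFlatPath I x⁻¹ y⁻¹ :=
  h.map (contMDiff_inv I ∞)

variable (I K) in
def flatPathSubgroup : Subgroup K where
  carrier := {g | JoinedByFlatPath I 1 g}
  one_mem' := JoinedByFlatPath.refl 1
  mul_mem' hg hh := by simpa using hg.mul hh
  inv_mem' hg := by simpa using hg.inv

theorem connectedComponent_one_subset_flatPathSubgroup :
    connectedComponent (1 : K) ⊆ flatPathSubgroup I K := by
  have : IsTopologicalGroup K := topologicalGroup_of_lieGroup I ∞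
  have hopen : IsOpen (flatPathSubgroup I K : Set K) :=
    Subgroup.isOpen_of_mem_nhds _ (eventually_joinedByFlatPath (I := I) (1 : K))
  exact IsClopen.connectedComponent_subset
    ⟨Subgroup.isClosed_of_isOpen _ hopen, hopen⟩ (one_mem _)

end LieGroup

theorem mul_inv_mem_connectedComponent_one {X G : Type*} [TopologicalSpace X]
    [PreconnectedSpace X] [TopologicalSpace G] [Group G] [ContinuousMul G] {f : X → G}
    (hf : Continuous f) (a b : X) : f a * (f b)⁻¹ ∈ connectedComponent (1 : G) :=
  (isPreconnected_range (hf.mul continuous_const)).subset_connectedComponent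
    ⟨b, mul_inv_cancel (f b)⟩ ⟨a, rfl⟩

section TwistedExtension

variable {M : Type*}

/-- The path `γ`, compressed to `[1/4, 3/4]` on each unit interval and transported there by
`σ ^ ⌊t⌋`. -/
noncomputable def twistedExtension (σ : Equiv.Perm M) (γ : ℝ → M) (t : ℝ) : M :=
  (σ ^ ⌊t⌋) (γ (2 * Int.fract t - 1 / 2))

variable {σ : Equiv.Perm M} {γ : ℝ → M}

theorem twistedExtension_add_one (t : ℝ) :
    twistedExtension σ γ (t + 1) = σ (twistedExtension σ γ t) := by
  rw [twistedExtension, twistedExtension, Int.floor_add_one, Int.fract_add_one, add_comm,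
    zpow_add, zpow_one, Equiv.Perm.mul_apply]

theorem twistedExtension_eq_of_mem_Ioo {n : ℤ} {t : ℝ} (ht : t ∈ Ioo (n : ℝ) (n + 1)) :
    twistedExtension σ γ t = (σ ^ n) (γ (2 * (t - n) - 1 / 2)) := by
  have hfloor : ⌊t⌋ = n := Int.floor_eq_iff.2 ⟨ht.1.le, ht.2⟩
  rw [twistedExtension, ← Int.self_sub_floor, hfloor]

theorem twistedExtension_eq_zpow_apply {a : M} (hγ₀ : ∀ t ≤ 0, γ t = a)
    (hγ₁ : ∀ t ≥ 1, γ t = σ a) {n : ℤ} {t : ℝ} (ht : t ∈ Ioo (n - 1 / 4 : ℝ) (n + 1 / 4)) :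
    twistedExtension σ γ t = (σ ^ n) a := by
  rcases le_or_gt (n : ℝ) t with hnt | htn
  · have hfloor : ⌊t⌋ = n := Int.floor_eq_iff.2 ⟨hnt, by linarith [ht.2]⟩
    rw [twistedExtension, ← Int.self_sub_floor, hfloor, hγ₀ _ (by linarith [ht.2])]
  · have hfloor : ⌊t⌋ = n - 1 :=
      Int.floor_eq_iff.2 ⟨by push_cast; linarith [ht.1], by push_cast; linarith⟩
    rw [twistedExtension, ← Int.self_sub_floor, hfloor,
      hγ₁ _ (by push_cast; linarith [ht.1]), ← Equiv.Perm.mul_apply, ← zpow_add_one,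
      sub_add_cancel]

variable {E : Type*} [NormedAddCommGroup E] [NormedSpace ℝ E]
  {H : Type*} [TopologicalSpace H] {I : ModelWithCorners ℝ E H}
  [TopologicalSpace M] [ChartedSpace H M]

theorem contMDiff_zpow (hσ : ContMDiff I I ∞ σ) (hσ' : ContMDiff I I ∞ σ.symm) (n : ℤ) :
    ContMDiff I I ∞ ⇑(σ ^ n) := by
  induction n using Int.induction_on with
  | zero => exact contMDiff_id
  | succ m ih => rw [zpow_add_one, Equiv.Perm.coe_mul]; exact ih.comp hσ
  | pred m ih =>
    rw [zpow_sub_one, Equiv.Perm.coe_mul, Equiv.Perm.inv_def]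
    exact ih.comp hσ'

theorem contMDiff_twistedExtension (hσ : ContMDiff I I ∞ σ) (hσ' : ContMDiff I I ∞ σ.symm)
    {a : M} (hγ : ContMDiff 𝓘(ℝ, ℝ) I ∞ γ) (hγ₀ : ∀ t ≤ 0, γ t = a)
    (hγ₁ : ∀ t ≥ 1, γ t = σ a) : ContMDiff 𝓘(ℝ, ℝ) I ∞ (twistedExtension σ γ) := by
  intro t
  rcases (Int.floor_le t).lt_or_eq with hlt | hint
  · have hrescale : ContDiff ℝ ∞ fun s : ℝ ↦ 2 * (s - ⌊t⌋) - 1 / 2 := by fun_prop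
    have hpiece : ContMDiff 𝓘(ℝ, ℝ) I ∞ fun s ↦ (σ ^ ⌊t⌋) (γ (2 * (s - ⌊t⌋) - 1 / 2)) :=
      (contMDiff_zpow hσ hσ' _).comp (hγ.comp hrescale.contMDiff)
    refine (hpiece t).congr_of_eventuallyEq ?_
    filter_upwards [Ioo_mem_nhds hlt (Int.lt_floor_add_one t)] with s hs
    exact twistedExtension_eq_of_mem_Ioo hs
  · refine (contMDiffAt_const (c := (σ ^ ⌊t⌋) a)).congr_of_eventuallyEq ?_
    filter_upwards [Ioo_mem_nhds (by linarith : (⌊t⌋ - 1 / 4 : ℝ) < t)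
      (by linarith : t < ⌊t⌋ + 1 / 4)] with s hs
    exact twistedExtension_eq_zpow_apply hγ₀ hγ₁ hs

end TwistedExtension

theorem twisted_loop_group_evaluation_image
    {E : Type*} [NormedAddCommGroup E] [NormedSpace ℝ E]
    {H : Type*} [TopologicalSpace H] (I : ModelWithCorners ℝ E H)
    {K : Type*} [TopologicalSpace K] [ChartedSpace H K] [Group K] [LieGroup I (⊤ : ℕ∞) K]
    (φ : K ≃* K)
    (hφ : ContMDiff I I (⊤ : ℕ∞) (φ : K → K))
    (hφ' : ContMDiff I I (⊤ : ℕ∞) (φ.symm : K → K)) :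
    {k : K | ∃ f : ℝ → K, ContMDiff 𝓘(ℝ, ℝ) I (⊤ : ℕ∞) f ∧
        (∀ t : ℝ, f (t + 1) = φ.symm (f t)) ∧ f 0 = k}
      = {k : K | φ k * k⁻¹ ∈ connectedComponent (1 : K)} := by
  have : IsTopologicalGroup K := topologicalGroup_of_lieGroup I ∞
  ext k
  constructor
  · rintro ⟨f, hf, hperiod, rfl⟩
    have hback : f (-1) = φ (f 0) := by
      rw [← φ.apply_symm_apply (f (-1)), ← hperiod, neg_add_cancel]
    simpa [hback] using mul_inv_mem_connectedComponent_one hf.continuous (-1) 0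
  · intro hk
    have hflat : JoinedByFlatPath I 1 (φ k * k⁻¹) :=
      connectedComponent_one_subset_flatPathSubgroup hk
    have hpath : JoinedByFlatPath I k (φ.symm k) := by
      simpa using ((hflat.mul (.refl k)).map hφ').symm
    obtain ⟨γ, hγ, hγ₀, hγ₁⟩ := hpath
    exact ⟨twistedExtension φ.symm.toEquiv γ,
      contMDiff_twistedExtension hφ' hφ hγ hγ₀ hγ₁, twistedExtension_add_one,
      by simp [twistedExtension, hγ₀]⟩
end

section
/- Let M be a smooth manifold, X and Y smooth vector fields on M, and m₀ ∈ M. Define γ(t) = Fl^Y_{−t} ∘ Fl^X_{−t} ∘ Fl^Y_{t} ∘ Fl^X_{t}(m₀) for small t ≥ 0, where Fl denotes the flow. Then γ(0) = m₀, γ'(0) = 0, and γ''(0) = 2·[X,Y](m₀). -/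
section FlowAux

variable {E : Type*} [NormedAddCommGroup E] [NormedSpace ℝ E]
  {X : E → E} {F : ℝ × E → E}

theorem flowAux_chain (hF : ContDiff ℝ (⊤ : ℕ∞) F) {u : ℝ → ℝ × E} {u' : ℝ × E} {t : ℝ}
    (hu : HasDerivAt u u' t) :
    HasDerivAt (fun s => F (u s)) (fderiv ℝ F (u t) u') t :=
  ((hF.differentiable (by simp) (u t)).hasFDerivAt).comp_hasDerivAt t hu

theorem flowAux_fderiv_one (hF : ContDiff ℝ (⊤ : ℕ∞) F)
    (hflow : ∀ (x : E) (t : ℝ), HasDerivAt (fun s => F (s, x)) (X (F (t, x))) t)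
    (t : ℝ) (x : E) :
    fderiv ℝ F (t, x) (1, 0) = X (F (t, x)) := by
  have hA : HasDerivAt (fun s : ℝ => F (s, x)) (fderiv ℝ F (t, x) (1, 0)) t :=
    flowAux_chain hF (HasDerivAt.prodMk (hasDerivAt_id t) (hasDerivAt_const t x))
  exact hA.unique (hflow x t)

theorem flowAux_fderiv_zero (hF : ContDiff ℝ (⊤ : ℕ∞) F) (h0 : ∀ x : E, F (0, x) = x)
    (hflow : ∀ (x : E) (t : ℝ), HasDerivAt (fun s => F (s, x)) (X (F (t, x))) t)
    (x : E) (s : ℝ) (v : E) :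
    fderiv ℝ F (0, x) (s, v) = s • X x + v := by
  have h1 : fderiv ℝ F (0, x) (1, 0) = X x := by
    rw [flowAux_fderiv_one hF hflow 0 x, h0]
  have h2 : fderiv ℝ F (0, x) (0, v) = v := by
    have hcurve : HasDerivAt (fun r : ℝ => ((0 : ℝ), x + r • v)) (0, v) 0 :=
      HasDerivAt.prodMk (hasDerivAt_const (0 : ℝ) (0 : ℝ))
        (((hasDerivAt_id (0 : ℝ)).smul_const v).const_add x |>.congr_deriv (by simp))
    have hA : HasDerivAt (fun r : ℝ => F (0, x + r • v)) (fderiv ℝ F (0, x) (0, v)) 0 := by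
      have := flowAux_chain hF hcurve
      simpa using this
    have hB : HasDerivAt (fun r : ℝ => F (0, x + r • v)) v 0 := by
      have : HasDerivAt (fun r : ℝ => x + r • v) v 0 :=
        ((hasDerivAt_id (0 : ℝ)).smul_const v).const_add x |>.congr_deriv (by simp)
      exact this.congr_of_eventuallyEq (by filter_upwards with r using h0 _)
    exact hA.unique hB
  have hsv : (s, v) = s • ((1 : ℝ), (0 : E)) + ((0 : ℝ), v) := by
    simp [Prod.ext_iff]
  rw [hsv, map_add, map_smul, h1, h2]

theorem flowAux_snd (hX : ContDiff ℝ (⊤ : ℕ∞) X) (hF : ContDiff ℝ (⊤ : ℕ∞) F) (h0 : ∀ x : E, F (0, x) = x)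
    (hflow : ∀ (x : E) (t : ℝ), HasDerivAt (fun s => F (s, x)) (X (F (t, x))) t)
    (x : E) (s s' : ℝ) (v v' : E) :
    fderiv ℝ (fderiv ℝ F) (0, x) (s, v) (s', v') =
      (s * s') • fderiv ℝ X x (X x) + s • fderiv ℝ X x v' + s' • fderiv ℝ X x v := by
  have hF' : ContDiff ℝ (⊤ : ℕ∞) (fderiv ℝ F) := hF.fderiv_right (by simp)
  set S := fderiv ℝ (fderiv ℝ F) (0, x) with hS
  have key : ∀ (u : ℝ → ℝ × E) (u' w : ℝ × E), u 0 = (0, x) →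
      HasDerivAt u u' 0 → HasDerivAt (fun r => fderiv ℝ F (u r) w) (S u' w) 0 := by
    intro u u' w hu0 hu
    have h1 : HasDerivAt (fun r => fderiv ℝ F (u r)) (fderiv ℝ (fderiv ℝ F) (u 0) u') 0 :=
      ((hF'.differentiable (by simp) (u 0)).hasFDerivAt).comp_hasDerivAt 0 hu
    rw [hu0, ← hS] at h1
    have := h1.clm_apply (hasDerivAt_const 0 w)
    simpa using this
  have hcurve : ∀ v : E, HasDerivAt (fun r : ℝ => ((0 : ℝ), x + r • v)) (0, v) 0 := fun v =>
    HasDerivAt.prodMk (hasDerivAt_const (0 : ℝ) (0 : ℝ))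
      (((hasDerivAt_id (0 : ℝ)).smul_const v).const_add x |>.congr_deriv (by simp))
  have h11 : S (1, 0) (1, 0) = fderiv ℝ X x (X x) := by
    have hA := key (fun t => (t, x)) (1, 0) (1, 0) rfl
      (HasDerivAt.prodMk (hasDerivAt_id (0 : ℝ)) (hasDerivAt_const (0 : ℝ) x))
    have hA' : HasDerivAt (fun t => X (F (t, x))) (S (1, 0) (1, 0)) 0 :=
      hA.congr_of_eventuallyEq
        (by filter_upwards with t using (flowAux_fderiv_one hF hflow t x).symm)
    have hB : HasDerivAt (fun t => X (F (t, x))) (fderiv ℝ X x (X x)) 0 := by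
      have := ((hX.differentiable (by simp) (F (0, x))).hasFDerivAt).comp_hasDerivAt 0 (hflow x 0)
      rw [h0] at this
      exact this
    exact hA'.unique hB
  have h01 : ∀ v : E, S (0, v) (1, 0) = fderiv ℝ X x v := by
    intro v
    have hA := key (fun r : ℝ => ((0 : ℝ), x + r • v)) (0, v) (1, 0) (by simp) (hcurve v)
    have hA' : HasDerivAt (fun r : ℝ => X (x + r • v)) (S (0, v) (1, 0)) 0 := by
      refine hA.congr_of_eventuallyEq ?_
      filter_upwards with r
      rw [flowAux_fderiv_one hF hflow 0 (x + r • v), h0]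
    have hB : HasDerivAt (fun r : ℝ => X (x + r • v)) (fderiv ℝ X x v) 0 := by
      have hc : HasDerivAt (fun r : ℝ => x + r • v) v 0 :=
        ((hasDerivAt_id (0 : ℝ)).smul_const v).const_add x |>.congr_deriv (by simp)
      have := ((hX.differentiable (by simp) (x + (0 : ℝ) • v)).hasFDerivAt).comp_hasDerivAt 0 hc
      simp at this; exact this
    exact hA'.unique hB
  have h00 : ∀ v v' : E, S (0, v) (0, v') = 0 := by
    intro v v'
    have hA := key (fun r : ℝ => ((0 : ℝ), x + r • v)) (0, v) (0, v') (by simp) (hcurve v)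
    have hA' : HasDerivAt (fun _ : ℝ => v') (S (0, v) (0, v')) 0 := by
      refine hA.congr_of_eventuallyEq ?_
      filter_upwards with r
      rw [flowAux_fderiv_zero hF h0 hflow (x + r • v) 0 v', zero_smul, zero_add]
    exact hA'.unique (hasDerivAt_const 0 v')
  have hsymm : ∀ p q : ℝ × E, S p q = S q p := fun p q =>
    second_derivative_symmetric (f := F) (f' := fderiv ℝ F)
      (fun y => (hF.differentiable (by simp) y).hasFDerivAt)
      ((hF'.differentiable (by simp) (0, x)).hasFDerivAt) p q
  have h10 : ∀ v' : E, S (1, 0) (0, v') = fderiv ℝ X x v' := fun v' => by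
    rw [hsymm, h01]
  have hsv : ((s : ℝ), v) = s • ((1 : ℝ), (0 : E)) + ((0 : ℝ), v) := by simp [Prod.ext_iff]
  have hsv' : ((s' : ℝ), v') = s' • ((1 : ℝ), (0 : E)) + ((0 : ℝ), v') := by simp [Prod.ext_iff]
  rw [hsv, hsv', map_add, map_smul]
  simp only [ContinuousLinearMap.add_apply, ContinuousLinearMap.smul_apply, map_add, map_smul,
    h11, h00 v v', h01 v, h10 v']
  module

end FlowAux

section FlowMain

variable {E : Type*} [NormedAddCommGroup E] [NormedSpace ℝ E]

theorem flowAux_main (X Y : E → E) (hX : ContDiff ℝ (⊤ : ℕ∞) X) (hY : ContDiff ℝ (⊤ : ℕ∞) Y)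
    (FX FY : ℝ × E → E)
    (hFX : ContDiff ℝ (⊤ : ℕ∞) FX) (hFY : ContDiff ℝ (⊤ : ℕ∞) FY)
    (h0X : ∀ x : E, FX (0, x) = x) (h0Y : ∀ x : E, FY (0, x) = x)
    (hflowX : ∀ (x : E) (t : ℝ), HasDerivAt (fun s => FX (s, x)) (X (FX (t, x))) t)
    (hflowY : ∀ (x : E) (t : ℝ), HasDerivAt (fun s => FY (s, x)) (Y (FY (t, x))) t)
    (m₀ : E) (γ : ℝ → E)
    (hγ : ∀ t : ℝ, γ t = FY (-t, FX (-t, FY (t, FX (t, m₀))))) :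
    γ 0 = m₀ ∧ deriv γ 0 = 0 ∧
      deriv (deriv γ) 0 = (2 : ℝ) • (fderiv ℝ Y m₀ (X m₀) - fderiv ℝ X m₀ (Y m₀)) := by
  have hFX' : ContDiff ℝ (⊤ : ℕ∞) (fderiv ℝ FX) := hFX.fderiv_right (by simp)
  have hFY' : ContDiff ℝ (⊤ : ℕ∞) (fderiv ℝ FY) := hFY.fderiv_right (by simp)
  -- the four curves and their derivatives
  set a : ℝ → E := fun t => FX (t, m₀) with hadef
  have ha : ∀ t, HasDerivAt a (X (a t)) t := fun t => hflowX m₀ t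
  have ha0 : a 0 = m₀ := h0X m₀
  set b : ℝ → E := fun t => FY (t, a t) with hbdef
  set Db : ℝ → E := fun t => fderiv ℝ FY (t, a t) (1, X (a t)) with hDbdef
  have hub : ∀ t, HasDerivAt (fun t : ℝ => (t, a t)) (1, X (a t)) t :=
    fun t => HasDerivAt.prodMk (hasDerivAt_id t) (ha t)
  have hb : ∀ t, HasDerivAt b (Db t) t := fun t => flowAux_chain hFY (hub t)
  have hb0 : b 0 = m₀ := by simp only [hbdef, ha0]; exact h0Y m₀
  set c : ℝ → E := fun t => FX (-t, b t) with hcdef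
  set Dc : ℝ → E := fun t => fderiv ℝ FX (-t, b t) (-1, Db t) with hDcdef
  have huc : ∀ t, HasDerivAt (fun t : ℝ => (-t, b t)) (-1, Db t) t :=
    fun t => HasDerivAt.prodMk ((hasDerivAt_id t).neg) (hb t)
  have hc : ∀ t, HasDerivAt c (Dc t) t := fun t => flowAux_chain hFX (huc t)
  have hc0 : c 0 = m₀ := by simp only [hcdef, neg_zero, hb0]; exact h0X m₀
  set Dγ : ℝ → E := fun t => fderiv ℝ FY (-t, c t) (-1, Dc t) with hDγdef
  have huγ : ∀ t, HasDerivAt (fun t : ℝ => (-t, c t)) (-1, Dc t) t :=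
    fun t => HasDerivAt.prodMk ((hasDerivAt_id t).neg) (hc t)
  have hγ' : ∀ t, HasDerivAt γ (Dγ t) t := by
    intro t
    have hA := flowAux_chain hFY (huγ t)
    exact hA.congr_of_eventuallyEq (by filter_upwards with s using hγ s)
  -- values of the derivatives at 0
  have hDb0 : Db 0 = Y m₀ + X m₀ := by
    simp only [hDbdef, ha0]
    rw [flowAux_fderiv_zero hFY h0Y hflowY m₀ 1 (X m₀), one_smul]
  have hDc0 : Dc 0 = Y m₀ := by
    simp only [hDcdef, neg_zero, hb0, hDb0]
    rw [flowAux_fderiv_zero hFX h0X hflowX m₀ (-1) (Y m₀ + X m₀)]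
    module
  have hDγ0 : Dγ 0 = 0 := by
    simp only [hDγdef, neg_zero, hc0, hDc0]
    rw [flowAux_fderiv_zero hFY h0Y hflowY m₀ (-1) (Y m₀)]
    module
  have hderivγ : deriv γ = Dγ := funext fun t => (hγ' t).deriv
  -- second derivatives
  have hXa : HasDerivAt (fun t => X (a t)) (fderiv ℝ X m₀ (X m₀)) 0 := by
    have h1 := ((hX.differentiable (by simp) (a 0)).hasFDerivAt).comp_hasDerivAt 0 (ha 0)
    rwa [ha0] at h1
  have hclmY : HasDerivAt (fun t => fderiv ℝ FY (t, a t))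
      (fderiv ℝ (fderiv ℝ FY) (0, m₀) (1, X m₀)) 0 := by
    have h1 := ((hFY'.differentiable (by simp) ((0 : ℝ), a 0)).hasFDerivAt).comp_hasDerivAt
      0 (hub 0)
    rwa [ha0] at h1
  have hDb' : HasDerivAt Db
      (fderiv ℝ Y m₀ (Y m₀) + (2 : ℝ) • fderiv ℝ Y m₀ (X m₀) + fderiv ℝ X m₀ (X m₀)) 0 := by
    have hw : HasDerivAt (fun t => ((1 : ℝ), X (a t))) ((0 : ℝ), fderiv ℝ X m₀ (X m₀)) 0 :=
      HasDerivAt.prodMk (hasDerivAt_const (0 : ℝ) (1 : ℝ)) hXa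
    have h1 := hclmY.clm_apply hw
    refine h1.congr_deriv ?_
    simp only [ha0]
    rw [flowAux_snd hY hFY h0Y hflowY m₀ 1 1 (X m₀) (X m₀),
      flowAux_fderiv_zero hFY h0Y hflowY m₀ 0 (fderiv ℝ X m₀ (X m₀))]
    module
  have hclmX : HasDerivAt (fun t => fderiv ℝ FX (-t, b t))
      (fderiv ℝ (fderiv ℝ FX) (0, m₀) (-1, Y m₀ + X m₀)) 0 := by
    have h1 := ((hFX'.differentiable (by simp) ((-(0 : ℝ)), b 0)).hasFDerivAt).comp_hasDerivAt
      0 (huc 0)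
    rwa [neg_zero, hb0, hDb0] at h1
  have hDc' : HasDerivAt Dc
      ((2 : ℝ) • fderiv ℝ Y m₀ (X m₀) - (2 : ℝ) • fderiv ℝ X m₀ (Y m₀)
        + fderiv ℝ Y m₀ (Y m₀)) 0 := by
    have hw : HasDerivAt (fun t => ((-1 : ℝ), Db t))
        ((0 : ℝ), fderiv ℝ Y m₀ (Y m₀) + (2 : ℝ) • fderiv ℝ Y m₀ (X m₀)
          + fderiv ℝ X m₀ (X m₀)) 0 :=
      HasDerivAt.prodMk (hasDerivAt_const (0 : ℝ) (-1 : ℝ)) hDb'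
    have h1 := hclmX.clm_apply hw
    refine h1.congr_deriv ?_
    simp only [neg_zero, hb0, hDb0]
    rw [flowAux_snd hX hFX h0X hflowX m₀ (-1) (-1) (Y m₀ + X m₀) (Y m₀ + X m₀),
      flowAux_fderiv_zero hFX h0X hflowX m₀ 0 _]
    simp only [map_add, map_smul]
    module
  have hclmY2 : HasDerivAt (fun t => fderiv ℝ FY (-t, c t))
      (fderiv ℝ (fderiv ℝ FY) (0, m₀) (-1, Y m₀)) 0 := by
    have h1 := ((hFY'.differentiable (by simp) ((-(0 : ℝ)), c 0)).hasFDerivAt).comp_hasDerivAt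
      0 (huγ 0)
    rwa [neg_zero, hc0, hDc0] at h1
  have hDγ' : HasDerivAt Dγ ((2 : ℝ) • (fderiv ℝ Y m₀ (X m₀) - fderiv ℝ X m₀ (Y m₀))) 0 := by
    have hw : HasDerivAt (fun t => ((-1 : ℝ), Dc t))
        ((0 : ℝ), (2 : ℝ) • fderiv ℝ Y m₀ (X m₀) - (2 : ℝ) • fderiv ℝ X m₀ (Y m₀)
          + fderiv ℝ Y m₀ (Y m₀)) 0 :=
      HasDerivAt.prodMk (hasDerivAt_const (0 : ℝ) (-1 : ℝ)) hDc'
    have h1 := hclmY2.clm_apply hw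
    refine h1.congr_deriv ?_
    simp only [neg_zero, hc0, hDc0]
    rw [flowAux_snd hY hFY h0Y hflowY m₀ (-1) (-1) (Y m₀) (Y m₀),
      flowAux_fderiv_zero hFY h0Y hflowY m₀ 0 _]
    module
  refine ⟨by rw [hγ 0]; simp only [neg_zero, h0X, h0Y], ?_, ?_⟩
  · rw [hderivγ]; exact hDγ0
  · rw [hderivγ]; exact hDγ'.deriv

end FlowMain

/- STATEMENT 14: For smooth vector fields X, Y (on a chart of a finite-dimensional manifold,
i.e. on a finite-dimensional real vector space E) with flows φX, φY, the curve
γ(t) = Fl^Y_{−t} ∘ Fl^X_{−t} ∘ Fl^Y_t ∘ Fl^X_t (m₀) satisfies γ(0) = m₀, γ'(0) = 0 and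
γ''(0) = 2·[X,Y](m₀), where [X,Y] = (DY)·X − (DX)·Y. -/
theorem flow_commutator_second_derivative
    {E : Type*} [NormedAddCommGroup E] [NormedSpace ℝ E] [FiniteDimensional ℝ E]
    (X Y : E → E) (hX : ContDiff ℝ (⊤ : ℕ∞) X) (hY : ContDiff ℝ (⊤ : ℕ∞) Y)
    (φX φY : ℝ → E → E)
    (hΦX : ContDiff ℝ (⊤ : ℕ∞) (fun p : ℝ × E => φX p.1 p.2))
    (hΦY : ContDiff ℝ (⊤ : ℕ∞) (fun p : ℝ × E => φY p.1 p.2))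
    (hX0 : ∀ x : E, φX 0 x = x) (hY0 : ∀ x : E, φY 0 x = x)
    (hXflow : ∀ (x : E) (t : ℝ), HasDerivAt (fun s => φX s x) (X (φX t x)) t)
    (hYflow : ∀ (x : E) (t : ℝ), HasDerivAt (fun s => φY s x) (Y (φY t x)) t)
    (m₀ : E)
    (γ : ℝ → E) (hγ : ∀ t : ℝ, γ t = φY (-t) (φX (-t) (φY t (φX t m₀)))) :
    γ 0 = m₀ ∧ deriv γ 0 = 0 ∧
      deriv (deriv γ) 0 = (2 : ℝ) • (fderiv ℝ Y m₀ (X m₀) - fderiv ℝ X m₀ (Y m₀)) :=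
  flowAux_main X Y hX hY (fun p : ℝ × E => φX p.1 p.2) (fun p : ℝ × E => φY p.1 p.2)
    hΦX hΦY hX0 hY0 hXflow hYflow m₀ γ hγ
end
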